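/- The number of Dyck paths of size n with all peaks at odd height equals the Motzkin number m_{n−1}, and the number of Dyck paths of size n with all peaks at even height equals the Riordan number r_n. -/

import Mathlib

/-- A Dyck path of size `n`: a list of booleans (`true` = north step, `false` = east step)
from `(0,0)` to `(n,n)` staying weakly above the diagonal `y = x`. -/
def IsDyckPath (n : ℕ) (w : List Bool) : Prop :=
  w.length = 2 * n ∧ w.count true = n ∧
    ∀ k, (w.take k).count false ≤ (w.take k).count true

/-- The `y`-coordinate of the lattice point reached after `k` steps. -/
def ycoord (w : List Bool) (k : ℕ) : ℕ := (w.take k).count true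

/-- The `x`-coordinate of the lattice point reached after `k` steps. -/
def xcoord (w : List Bool) (k : ℕ) : ℕ := (w.take k).count false

/-- A peak: a north step at position `i` followed by an east step. -/
def IsPeak (w : List Bool) (i : ℕ) : Prop := w[i]? = some true ∧ w[i+1]? = some false

/-- A valley: an east step at position `i` followed by a north step. -/
def IsValley (w : List Bool) (i : ℕ) : Prop := w[i]? = some false ∧ w[i+1]? = some true

/-- Height above the diagonal after `k` steps. -/
def pdepth (w : List Bool) (k : ℕ) : ℤ := (ycoord w k : ℤ) - (xcoord w k : ℤ)

/-- Step `i` (a north step) of `w` is matched with step `j` (an east step):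
the facing east step at the same height (balanced-parentheses matching). -/
def Matches (w : List Bool) (i j : ℕ) : Prop :=
  i < j ∧ w[i]? = some true ∧ w[j]? = some false ∧
    pdepth w (j + 1) = pdepth w i ∧ ∀ k, i < k → k ≤ j → pdepth w i < pdepth w k

/-- The graph on `m` points whose edges are the upper arches and the lower arches;
its connected components are the components of the corresponding meander. -/
def meanderGraph (m : ℕ) (upper lower : ℕ → ℕ → Prop) : SimpleGraph (Fin m) where
  Adj i j := i ≠ j ∧ (upper i.1 j.1 ∨ upper j.1 i.1 ∨ lower i.1 j.1 ∨ lower j.1 i.1)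
  symm := by
    constructor
    intro i j h
    exact ⟨h.1.symm, by tauto⟩
  loopless := by
    constructor
    intro i h
    exact h.1 rfl

/-- The number of components of the meander with the matching of `P` above and the
matching of `Q` below. -/
noncomputable def trajPQ (n : ℕ) (P Q : List Bool) : ℕ :=
  Nat.card (meanderGraph (2 * n) (Matches P) (Matches Q)).ConnectedComponent

/-- The number of components of the meander with the matching of `P` above and the
rainbow matching `i ↦ 2n - 1 - i` below. -/
noncomputable def traj (n : ℕ) (P : List Bool) : ℕ :=
  Nat.card (meanderGraph (2 * n) (Matches P)
    (fun i j => i + j + 1 = 2 * n)).ConnectedComponent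

/-- No peak with even `y`-coordinate and no valley with odd `x`-coordinate. -/
def NoBadCorner (w : List Bool) : Prop :=
  (∀ i, IsPeak w i → Odd (ycoord w (i + 1))) ∧
  (∀ i, IsValley w i → Even (xcoord w (i + 1)))

/-- A bad corner: a peak with even `y`-coordinate or a valley with odd `x`-coordinate. -/
def IsBadCorner (w : List Bool) (i : ℕ) : Prop :=
  (IsPeak w i ∧ Even (ycoord w (i + 1))) ∨ (IsValley w i ∧ Odd (xcoord w (i + 1)))

/-- Interchange the two steps of the corner at positions `i`, `i+1`. -/
def swapCorner (w : List Bool) (i : ℕ) : List Bool :=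
  (w.set i (w.getD (i + 1) true)).set (i + 1) (w.getD i true)

open Classical in
/-- The involution `φ`: swap the two steps of the first bad corner, if any. -/
noncomputable def phiMap (w : List Bool) : List Bool :=
  if h : ∃ i, IsBadCorner w i then swapCorner w (Nat.find h) else w

/-- The number of unit squares between a Dyck path and the diagonal `y = x`. -/
def area (w : List Bool) : ℕ :=
  ((List.range w.length).map fun i =>
    if w.getD i true then 0 else ycoord w i - xcoord w i - 1).sum

/-- The zigzag Dyck path `(NE)^m`. -/
def zigzag (m : ℕ) : List Bool := (List.replicate m [true, false]).flatten

/-- `N^{2a_1} E^{2b_1} ⋯ N^{2a_t} E^{2b_t}` for `ab = [(a_1,b_1),…,(a_t,b_t)]`. -/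
def doubledWord (ab : List (ℕ × ℕ)) : List Bool :=
  (ab.map fun p => List.replicate (2 * p.1) true ++ List.replicate (2 * p.2) false).flatten

/-- `N^{a_1} E^{b_1} ⋯ N^{a_t} E^{b_t}` for `ab = [(a_1,b_1),…,(a_t,b_t)]`. -/
def halfWord (ab : List (ℕ × ℕ)) : List Bool :=
  (ab.map fun p => List.replicate p.1 true ++ List.replicate p.2 false).flatten

/-- All peaks at odd height (`height` = `y - x` at the peak's lattice point). -/
def AllPeaksOdd (w : List Bool) : Prop :=
  ∀ i, IsPeak w i → Odd (ycoord w (i + 1) - xcoord w (i + 1))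

/-- All peaks at even height. -/
def AllPeaksEven (w : List Bool) : Prop :=
  ∀ i, IsPeak w i → Even (ycoord w (i + 1) - xcoord w (i + 1))

/-- Steps of a Motzkin path: up, horizontal, down. -/
inductive MStep | U | H | D
deriving DecidableEq

/-- The total height change along a list of Motzkin steps. -/
def msum (l : List MStep) : ℤ :=
  (l.map fun s => match s with | MStep.U => 1 | MStep.H => 0 | MStep.D => -1).sum

/-- A Motzkin path of length `n`. -/
def IsMotzkin (n : ℕ) (l : List MStep) : Prop :=
  l.length = n ∧ msum l = 0 ∧ ∀ k, 0 ≤ msum (l.take k)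

/-- A Riordan path of length `n`: a Motzkin path with no horizontal step on the `x`-axis. -/
def IsRiordan (n : ℕ) (l : List MStep) : Prop :=
  IsMotzkin n l ∧ ∀ i, l[i]? = some MStep.H → msum (l.take i) ≠ 0

/-- The map `φ_A` from Dyck paths of size `n+1` (all peaks at odd height)
to Motzkin paths of length `n`: `v_j` is read off from steps `p_{2j} p_{2j+1}`. -/
def phiA (n : ℕ) (P : List Bool) : List MStep :=
  (List.range n).map fun j =>
    match P.getD (2 * j + 1) true, P.getD (2 * j + 2) true with
    | true, true => MStep.U
    | false, true => MStep.H
    | _, _ => MStep.D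

/-- The map `φ_B` from Dyck paths of size `n` (all peaks at even height)
to Riordan paths of length `n`: `u_j` is read off from steps `p_{2j-1} p_{2j}`. -/
def phiB (n : ℕ) (P : List Bool) : List MStep :=
  (List.range n).map fun j =>
    match P.getD (2 * j) true, P.getD (2 * j + 1) true with
    | true, true => MStep.U
    | false, true => MStep.H
    | _, _ => MStep.D

/-!
The height `y - x` of a Dyck path after `k` steps has the parity of `k`, so a peak formed by
steps `i, i + 1` has height of the parity of `i + 1`. Hence all peaks are at even height iff no
pair of steps `2j, 2j + 1` is `NE`, i.e. iff the path is a word in the blocks `NN`, `EN`, `EE`.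
Reading these blocks as `U`, `H`, `D` gives a Motzkin path whose height after `j` blocks is half
the Dyck height after `2j` steps; the only further constraint, coming from the odd prefixes, is
that an `EN` block must not start on the diagonal, which is exactly the Riordan condition.
A Dyck path with all peaks at odd height is `N P' E` with `P'` a word in the same blocks; there
the odd prefixes are lifted by one and impose nothing, so `P'` ranges over all Motzkin paths
of length `n - 1`.
-/

namespace MStep

def toSteps : MStep → List Bool
  | U => [true, true]
  | H => [false, true]
  | D => [false, false]

end MStep

def encodeSteps (l : List MStep) : List Bool := l.flatMap MStep.toSteps

def decodeSteps : List Bool → List MStep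
  | true :: true :: t => .U :: decodeSteps t
  | false :: true :: t => .H :: decodeSteps t
  | false :: false :: t => .D :: decodeSteps t
  | _ => []

def balance (w : List Bool) : ℤ := (w.count true : ℤ) - w.count false

def elevate (w : List Bool) : List Bool := true :: (w ++ [false])

lemma balance_append (v w : List Bool) : balance (v ++ w) = balance v + balance w := by
  simp only [balance, List.count_append]; push_cast; ring

lemma balance_cons (b : Bool) (w : List Bool) : balance (b :: w) = balance [b] + balance w :=
  balance_append [b] w

lemma balance_singleton (b : Bool) : balance [b] = if b then 1 else -1 := by
  cases b <;> rfl

lemma pdepth_eq_balance_take (w : List Bool) (k : ℕ) : pdepth w k = balance (w.take k) := rfl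

@[simp] lemma pdepth_zero (w : List Bool) : pdepth w 0 = 0 := rfl

lemma pdepth_of_length_le {w : List Bool} {k : ℕ} (h : w.length ≤ k) :
    pdepth w k = balance w := by
  rw [pdepth_eq_balance_take, List.take_of_length_le h]

lemma pdepth_cons_succ (b : Bool) (w : List Bool) (k : ℕ) :
    pdepth (b :: w) (k + 1) = balance [b] + pdepth w k := by
  rw [pdepth_eq_balance_take, List.take_succ_cons, balance_cons, pdepth_eq_balance_take]

lemma pdepth_append_of_le_length {v : List Bool} {k : ℕ} (w : List Bool) (h : k ≤ v.length) :
    pdepth (v ++ w) k = pdepth v k := by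
  rw [pdepth_eq_balance_take, List.take_append_of_le_length h, pdepth_eq_balance_take]

lemma msum_append (l l' : List MStep) : msum (l ++ l') = msum l + msum l' := by
  simp only [msum, List.map_append, List.sum_append]

lemma msum_cons (s : MStep) (l : List MStep) : msum (s :: l) = msum [s] + msum l :=
  msum_append [s] l

lemma msum_take_add_one {l : List MStep} {j : ℕ} {s : MStep} (h : l[j]? = some s) :
    msum (l.take (j + 1)) = msum (l.take j) + msum [s] := by
  rw [List.take_add_one, h, Option.toList_some, msum_append]

@[simp] lemma encodeSteps_nil : encodeSteps [] = [] := rfl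

@[simp] lemma encodeSteps_cons (s : MStep) (l : List MStep) :
    encodeSteps (s :: l) = s.toSteps ++ encodeSteps l := rfl

lemma encodeSteps_append (l l' : List MStep) :
    encodeSteps (l ++ l') = encodeSteps l ++ encodeSteps l' :=
  List.flatMap_append

@[simp] lemma length_toSteps (s : MStep) : s.toSteps.length = 2 := by cases s <;> rfl

@[simp] lemma length_encodeSteps (l : List MStep) :
    (encodeSteps l).length = 2 * l.length := by
  induction l with
  | nil => rfl
  | cons s l ih =>
    rw [encodeSteps_cons, List.length_append, ih, length_toSteps, List.length_cons]
    ring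

lemma balance_toSteps (s : MStep) : balance s.toSteps = 2 * msum [s] := by
  cases s <;> rfl

lemma balance_encodeSteps (l : List MStep) : balance (encodeSteps l) = 2 * msum l := by
  induction l with
  | nil => rfl
  | cons s l ih =>
    rw [encodeSteps_cons, balance_append, ih, balance_toSteps, msum_cons s l]
    ring

lemma decodeSteps_encodeSteps (l : List MStep) : decodeSteps (encodeSteps l) = l := by
  induction l with
  | nil => rfl
  | cons s l ih => cases s <;> simp [MStep.toSteps, decodeSteps, ih]

lemma encodeSteps_injective : Function.Injective encodeSteps :=
  Function.LeftInverse.injective decodeSteps_encodeSteps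

lemma encodeSteps_decodeSteps :
    ∀ {w : List Bool}, Even w.length → (∀ j, ¬IsPeak w (2 * j)) →
      encodeSteps (decodeSteps w) = w
  | [], _, _ => rfl
  | [_], h, _ => by simp at h
  | a :: b :: t, h, hw => by
    have ht : encodeSteps (decodeSteps t) = t :=
      encodeSteps_decodeSteps (by simpa [Nat.even_add_one] using h) fun j => hw (j + 1)
    cases a <;> cases b
    case true.false => exact (hw 0 ⟨rfl, rfl⟩).elim
    all_goals simp [decodeSteps, MStep.toSteps, ht]

lemma not_isPeak_encodeSteps_append {r : List Bool} (hr : ∀ j, ¬IsPeak r (2 * j)) :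
    ∀ (l : List MStep) (j : ℕ), ¬IsPeak (encodeSteps l ++ r) (2 * j)
  | [], j => hr j
  | s :: _, 0 => by cases s <;> simp [IsPeak, MStep.toSteps]
  | s :: l, j + 1 => by cases s <;> exact not_isPeak_encodeSteps_append hr l j

lemma take_two_mul_encodeSteps (l : List MStep) (j : ℕ) :
    (encodeSteps l).take (2 * j) = encodeSteps (l.take j) := by
  induction l generalizing j with
  | nil => simp
  | cons s l ih =>
    cases j with
    | zero => simp
    | succ j =>
      rw [encodeSteps_cons, List.take_succ_cons, encodeSteps_cons, ← ih, Nat.mul_succ,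
        ← length_toSteps s, Nat.add_comm, List.take_length_add_append]

lemma pdepth_encodeSteps_two_mul (l : List MStep) (j : ℕ) :
    pdepth (encodeSteps l) (2 * j) = 2 * msum (l.take j) := by
  rw [pdepth_eq_balance_take, take_two_mul_encodeSteps, balance_encodeSteps]

lemma pdepth_encodeSteps_two_mul_add_one {l : List MStep} {j : ℕ} {s : MStep}
    (h : l[j]? = some s) :
    pdepth (encodeSteps l) (2 * j + 1) = 2 * msum (l.take j) + balance (s.toSteps.take 1) := by
  obtain ⟨hj, rfl⟩ := List.getElem?_eq_some_iff.mp h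
  have hsplit : encodeSteps l =
      encodeSteps (l.take j) ++ (l[j].toSteps ++ encodeSteps (l.drop (j + 1))) := by
    conv_lhs => rw [← List.take_append_drop j l, List.drop_eq_getElem_cons hj]
    rw [encodeSteps_append, encodeSteps_cons]
  have hlen : (encodeSteps (l.take j)).length = 2 * j := by
    rw [length_encodeSteps, List.length_take, Nat.min_eq_left hj.le]
  rw [pdepth_eq_balance_take, hsplit, ← hlen, List.take_length_add_append, balance_append,
    balance_encodeSteps, List.take_append_of_le_length (by simp)]

theorem forall_nonneg_pdepth_encodeSteps_iff (c : ℤ) (l : List MStep) :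
    (∀ k, 0 ≤ c + pdepth (encodeSteps l) k) ↔
      (∀ j, 0 ≤ c + 2 * msum (l.take j)) ∧
        ∀ j, l[j]? = some .H → c + 2 * msum (l.take j) ≠ 0 := by
  refine ⟨fun h => ⟨fun j => ?_, fun j hj => ?_⟩, fun ⟨heven, hH⟩ k => ?_⟩
  · simpa [pdepth_encodeSteps_two_mul] using h (2 * j)
  · have hodd := h (2 * j + 1)
    rw [pdepth_encodeSteps_two_mul_add_one hj] at hodd
    change 0 ≤ c + (2 * msum (l.take j) + -1) at hodd
    omega
  obtain ⟨j, rfl | rfl⟩ := Nat.even_or_odd' k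
  · simpa [pdepth_encodeSteps_two_mul] using heven j
  have h0 := heven j
  cases hj : l[j]? with
  | none =>
    have hlen : (encodeSteps l).length ≤ 2 * j := by simpa using hj
    rw [pdepth_of_length_le (by omega), ← pdepth_of_length_le hlen, pdepth_encodeSteps_two_mul]
    exact h0
  | some s =>
    rw [pdepth_encodeSteps_two_mul_add_one hj]
    cases s
    case U =>
      change 0 ≤ c + (2 * msum (l.take j) + 1)
      omega
    case H =>
      change 0 ≤ c + (2 * msum (l.take j) + -1)
      have := hH j hj
      omega
    case D =>
      -- the height after the whole `EE` block is already nonnegative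
      change 0 ≤ c + (2 * msum (l.take j) + -1)
      have h1 := heven (j + 1)
      rw [msum_take_add_one hj] at h1
      change 0 ≤ c + 2 * (msum (l.take j) + -1) at h1
      omega

lemma isDyckPath_iff {n : ℕ} {w : List Bool} :
    IsDyckPath n w ↔ w.length = 2 * n ∧ balance w = 0 ∧ ∀ k, 0 ≤ pdepth w k := by
  have hcount := List.count_true_add_count_false w
  simp only [IsDyckPath, balance, pdepth, ycoord, xcoord]
  exact and_congr_right fun _ => and_congr (by omega) (forall_congr' fun k => by omega)

lemma IsDyckPath.even_height_iff {n i : ℕ} {w : List Bool} (hw : IsDyckPath n w)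
    (hp : IsPeak w i) : Even (ycoord w (i + 1) - xcoord w (i + 1)) ↔ Odd i := by
  have hi : i + 1 < w.length := (List.getElem?_eq_some_iff.mp hp.2).1
  have hsum : ycoord w (i + 1) + xcoord w (i + 1) = i + 1 := by
    rw [ycoord, xcoord, List.count_true_add_count_false, List.length_take]; omega
  have hle : xcoord w (i + 1) ≤ ycoord w (i + 1) := hw.2.2 (i + 1)
  rw [Nat.even_iff, Nat.odd_iff]
  omega

lemma IsDyckPath.allPeaksEven_iff {n : ℕ} {w : List Bool} (hw : IsDyckPath n w) :
    AllPeaksEven w ↔ ∀ j, ¬IsPeak w (2 * j) := by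
  refine ⟨fun h j hp => ?_, fun h i hp => (hw.even_height_iff hp).mpr ?_⟩
  · exact Nat.not_odd_iff_even.mpr (even_two_mul j) ((hw.even_height_iff hp).mp (h _ hp))
  · obtain ⟨j, rfl | rfl⟩ := Nat.even_or_odd' i
    · exact (h j hp).elim
    · exact odd_two_mul_add_one j

lemma IsDyckPath.allPeaksOdd_iff {n : ℕ} {w : List Bool} (hw : IsDyckPath n w) :
    AllPeaksOdd w ↔ ∀ j, ¬IsPeak w (2 * j + 1) := by
  refine ⟨fun h j hp => ?_, fun h i hp => ?_⟩
  · exact Nat.not_even_iff_odd.mpr (h _ hp) ((hw.even_height_iff hp).mpr (odd_two_mul_add_one j))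
  · rw [← Nat.not_even_iff_odd, hw.even_height_iff hp]
    obtain ⟨j, rfl | rfl⟩ := Nat.even_or_odd' i
    · exact Nat.not_odd_iff_even.mpr (even_two_mul j)
    · exact (h j hp).elim

lemma IsPeak.append {w : List Bool} {i : ℕ} (h : IsPeak w i) (r : List Bool) :
    IsPeak (w ++ r) i :=
  ⟨(List.getElem?_append_left (List.getElem?_eq_some_iff.mp h.1).1).trans h.1,
    (List.getElem?_append_left (List.getElem?_eq_some_iff.mp h.2).1).trans h.2⟩

lemma isDyckPath_encodeSteps_iff {n : ℕ} {l : List MStep} :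
    IsDyckPath n (encodeSteps l) ↔ IsRiordan n l := by
  have key := forall_nonneg_pdepth_encodeSteps_iff 0 l
  simp only [zero_add] at key
  rw [isDyckPath_iff, length_encodeSteps, balance_encodeSteps, key]
  simp [IsRiordan, IsMotzkin, and_assoc]

lemma elevate_injective : Function.Injective elevate :=
  fun _ _ h => List.append_cancel_right (List.cons_injective h)

lemma length_elevate (w : List Bool) : (elevate w).length = w.length + 2 := by
  simp [elevate]

lemma balance_elevate (w : List Bool) : balance (elevate w) = balance w := by
  rw [elevate, balance_cons, balance_append, balance_singleton, balance_singleton]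
  simp

lemma forall_nonneg_pdepth_elevate_iff {w : List Bool} (hw : balance w = 0) :
    (∀ k, 0 ≤ pdepth (elevate w) k) ↔ ∀ k, 0 ≤ 1 + pdepth w k := by
  have hN : balance [true] = 1 := rfl
  unfold elevate
  refine ⟨fun h k => ?_, fun h k => ?_⟩
  · by_cases hk : k ≤ w.length
    · simpa [pdepth_cons_succ, pdepth_append_of_le_length _ hk, hN] using h (k + 1)
    · rw [pdepth_of_length_le (by omega), hw]; norm_num
  · cases k with
    | zero => simp
    | succ k =>
      rw [pdepth_cons_succ, hN]
      by_cases hk : k ≤ w.length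
      · rw [pdepth_append_of_le_length _ hk]; exact h k
      · rw [pdepth_of_length_le (by simp; omega), balance_append, hw]; rfl

lemma isDyckPath_succ_elevate_encodeSteps_iff {n : ℕ} {l : List MStep} :
    IsDyckPath (n + 1) (elevate (encodeSteps l)) ↔ IsMotzkin n l := by
  rw [isDyckPath_iff, balance_elevate, balance_encodeSteps, length_elevate, length_encodeSteps]
  constructor
  · rintro ⟨hlen, hsum, hpre⟩
    replace hsum : msum l = 0 := by omega
    rw [forall_nonneg_pdepth_elevate_iff (by rw [balance_encodeSteps, hsum]; rfl),
      forall_nonneg_pdepth_encodeSteps_iff] at hpre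
    exact ⟨by omega, hsum, fun k => by have := hpre.1 k; omega⟩
  · rintro ⟨hlen, hsum, hpre⟩
    refine ⟨by omega, by omega, ?_⟩
    rw [forall_nonneg_pdepth_elevate_iff (by rw [balance_encodeSteps, hsum]; rfl),
      forall_nonneg_pdepth_encodeSteps_iff]
    exact ⟨fun j => by have := hpre j; omega, fun j _ => by omega⟩

lemma IsDyckPath.exists_eq_elevate {n : ℕ} {w : List Bool} (hw : IsDyckPath (n + 1) w) :
    ∃ v, w = elevate v := by
  obtain ⟨hlen, hbal, hpre⟩ := isDyckPath_iff.mp hw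
  obtain ⟨a, v, rfl⟩ := List.exists_cons_of_length_pos (by omega : 0 < w.length)
  obtain rfl | ⟨v, b, rfl⟩ := List.eq_nil_or_concat' v
  · simp only [List.length_singleton] at hlen; omega
  have ha : a = true := by
    have h1 := hpre 1
    rw [pdepth_cons_succ, pdepth_zero, balance_singleton] at h1
    cases a
    · simp at h1
    · rfl
  have hb : b = false := by
    have h2 := hpre (v.length + 1)
    rw [pdepth_cons_succ, pdepth_append_of_le_length _ le_rfl, pdepth_of_length_le le_rfl] at h2
    rw [balance_cons, balance_append, balance_singleton b] at hbal
    cases b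
    · rfl
    · simp only [if_true] at hbal; omega
  exact ⟨v, by rw [ha, hb]; rfl⟩

lemma setOf_isDyckPath_allPeaksEven (n : ℕ) :
    {P | IsDyckPath n P ∧ AllPeaksEven P} = encodeSteps '' {l | IsRiordan n l} := by
  ext P
  constructor
  · rintro ⟨hP, heven⟩
    have hdec : encodeSteps (decodeSteps P) = P :=
      encodeSteps_decodeSteps (by rw [hP.1]; exact even_two_mul n) (hP.allPeaksEven_iff.mp heven)
    exact ⟨decodeSteps P, isDyckPath_encodeSteps_iff.mp (by rwa [hdec]), hdec⟩
  · rintro ⟨l, hl, rfl⟩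
    have hP := isDyckPath_encodeSteps_iff.mpr hl
    refine ⟨hP, hP.allPeaksEven_iff.mpr fun j => ?_⟩
    simpa using not_isPeak_encodeSteps_append (r := []) (fun j hp => by simp [IsPeak] at hp) l j

lemma setOf_isDyckPath_succ_allPeaksOdd (n : ℕ) :
    {P | IsDyckPath (n + 1) P ∧ AllPeaksOdd P} =
      (elevate ∘ encodeSteps) '' {l | IsMotzkin n l} := by
  ext P
  constructor
  · rintro ⟨hP, hodd⟩
    obtain ⟨v, rfl⟩ := hP.exists_eq_elevate
    have hv : Even v.length := ⟨n, by have := hP.1; rw [length_elevate] at this; omega⟩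
    -- a peak of `elevate v` at position `2j + 1` is a peak of `v ++ [false]` at `2j`
    have hdec : encodeSteps (decodeSteps v) = v :=
      encodeSteps_decodeSteps hv fun j hp => hP.allPeaksOdd_iff.mp hodd j (hp.append [false])
    exact ⟨decodeSteps v, isDyckPath_succ_elevate_encodeSteps_iff.mp (by rwa [hdec]),
      by simp only [Function.comp, hdec]⟩
  · rintro ⟨l, hl, rfl⟩
    have hP := isDyckPath_succ_elevate_encodeSteps_iff.mpr hl
    exact ⟨hP, hP.allPeaksOdd_iff.mpr fun j =>
      not_isPeak_encodeSteps_append (fun j hp => by simp [IsPeak] at hp) l j⟩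

lemma card_isDyckPath_zero_allPeaksOdd :
    Nat.card {P // IsDyckPath 0 P ∧ AllPeaksOdd P} = 1 :=
  Nat.card_eq_one_iff_exists.mpr
    ⟨⟨[], ⟨rfl, rfl, by simp⟩, fun i hp => by simp [IsPeak] at hp⟩,
    fun P => Subtype.ext (List.eq_nil_of_length_eq_zero P.2.1.1)⟩

lemma card_isMotzkin_zero : Nat.card {l // IsMotzkin 0 l} = 1 :=
  Nat.card_eq_one_iff_exists.mpr ⟨⟨[], rfl, rfl, by simp [msum]⟩,
    fun l => Subtype.ext (List.eq_nil_of_length_eq_zero l.2.1)⟩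

/-- Dyck paths of size `n` with all peaks at odd height are counted by the Motzkin number
`m_{n-1}` and those with all peaks at even height by the Riordan number `r_n`
(both defined here as path counts). -/
theorem odd_even_peak_counts (n : ℕ) :
    Nat.card {P : List Bool // IsDyckPath n P ∧ AllPeaksOdd P} =
      Nat.card {l : List MStep // IsMotzkin (n - 1) l} ∧
    Nat.card {P : List Bool // IsDyckPath n P ∧ AllPeaksEven P} =
      Nat.card {l : List MStep // IsRiordan n l} := by
  refine ⟨?_, ?_⟩
  · cases n with
    | zero => rw [card_isDyckPath_zero_allPeaksOdd, Nat.zero_sub, card_isMotzkin_zero]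
    | succ n =>
      have h := Nat.card_image_of_injective (elevate_injective.comp encodeSteps_injective)
        {l | IsMotzkin n l}
      rwa [← setOf_isDyckPath_succ_allPeaksOdd] at h
  · have h := Nat.card_image_of_injective encodeSteps_injective {l | IsRiordan n l}
    rwa [← setOf_isDyckPath_allPeaksEven] at h
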